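/- For any positive integers m and q, there exist infinitely many even integers k for which the Poincaré series P_{m,k,q} is not identically zero on ℍ. -/

import Mathlib

open Complex Filter MeasureTheory
open scoped Real Topology

noncomputable section

namespace EP

/-- `SL_2(ℤ)`. -/
abbrev SL2Z := Matrix.SpecialLinearGroup (Fin 2) ℤ

/-- Elements of `Γ_0(q)`: matrices in `SL_2(ℤ)` whose lower-left entry is divisible by `q`. -/
def Level (q : ℕ) := {M : SL2Z // (q : ℤ) ∣ M.1 1 0}

/-- The relation identifying `M` and `N` iff they lie in the same coset of
`Γ_∞ = {(1 u; 0 1) : u ∈ ℤ}`, i.e. `N = (1 u; 0 1) M` for some `u ∈ ℤ`.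
The quotient `Quot (rel q)` is the coset space `Γ_∞ \ Γ_0(q)`. -/
def rel (q : ℕ) (M N : Level q) : Prop :=
  ∃ u : ℤ, N.1.1 = !![1, u; 0, 1] * M.1.1

/-- A single term `(cz+d)^{-k} e^{2πi m Mz}` of the Poincaré series. -/
def term (m k : ℕ) (M : SL2Z) (z : ℂ) : ℂ :=
  ((M.1 1 0 : ℂ) * z + (M.1 1 1 : ℂ)) ^ (-(k : ℤ)) *
    Complex.exp (2 * π * Complex.I * (m : ℂ) *
      (((M.1 0 0 : ℂ) * z + (M.1 0 1 : ℂ)) / ((M.1 1 0 : ℂ) * z + (M.1 1 1 : ℂ))))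

/-- The Poincaré series `P_{m,k,q}(z) = Σ_{M ∈ Γ_∞\Γ_0(q)} (cz+d)^{-k} e^{2πi m Mz}`,
summed over coset representatives (the terms do not depend on the representative). -/
def Poincare (m k q : ℕ) (z : ℂ) : ℂ :=
  ∑' c : Quot (rel q), term m k (Quot.out c).1 z

/-- The `N`-th Fourier coefficient `p_{m,k,q}(N) = ∫_0^1 P_{m,k,q}(x+iy) e^{-2πiN(x+iy)} dx`
(for any choice of `y > 0`). -/
def fcoeff (m k q : ℕ) (y : ℝ) (N : ℕ) : ℂ :=
  ∫ x in (0 : ℝ)..(1 : ℝ), Poincare m k q ((x : ℂ) + (y : ℂ) * Complex.I) *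
    Complex.exp (-(2 * π * Complex.I) * (N : ℂ) * ((x : ℂ) + (y : ℂ) * Complex.I))

end EP

/-!
Fix `τ` with `Im τ > 1`. Then `|cτ + d| ≥ 1` for every bottom row `(c, d)` of `SL_2(ℤ)`, with
`|cτ + d| > 1` unless `c = 0`. The cosets with `c = 0` are exactly `Γ_∞` and `Γ_∞ (-1)`; for even
`k` each contributes `e^{2πimτ}`, while every other term is at most `|cτ + d|^{-k} → 0`, and all
terms are dominated by the summable Eisenstein majorant `|cτ + d|^{-3}`. By dominated convergence
`P_{m,k,q}(τ) → 2 e^{2πimτ} ≠ 0` as `k → ∞` through even values.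
-/

open scoped UpperHalfPlane

namespace EP

open ModularGroup EisensteinSeries
open UpperHalfPlane (coe_specialLinearGroup_apply norm_exp_two_pi_I_lt_one)

lemma SL2Z.lowerRight_eq_one_or_neg_one {M : SL2Z} (hc : M 1 0 = 0) :
    M 1 1 = 1 ∨ M 1 1 = -1 := by
  have hdet := M.det_coe
  rw [Matrix.det_fin_two, hc, mul_zero, sub_zero] at hdet
  exact (Int.eq_one_or_neg_one_of_mul_eq_one' hdet).imp And.right And.right

lemma im_le_norm_mul_add {c : ℤ} (hc : c ≠ 0) (d : ℤ) {z : ℂ} (hz : 0 ≤ z.im) :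
    z.im ≤ ‖(c : ℂ) * z + d‖ :=
  calc z.im ≤ |(c : ℝ)| * z.im :=
        le_mul_of_one_le_left hz (by exact_mod_cast Int.one_le_abs hc)
    _ = |((c : ℂ) * z + d).im| := by simp [abs_mul, abs_of_nonneg hz]
    _ ≤ ‖(c : ℂ) * z + d‖ := abs_im_le_norm _

lemma SL2Z.one_le_norm_denom (M : SL2Z) {z : ℂ} (hz : 1 ≤ z.im) :
    1 ≤ ‖(M 1 0 : ℂ) * z + M 1 1‖ := by
  by_cases hc : M 1 0 = 0
  · rcases lowerRight_eq_one_or_neg_one hc with hd | hd <;> simp [hc, hd]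
  · exact hz.trans (im_le_norm_mul_add hc _ (zero_le_one.trans hz))

lemma norm_cexp_two_pi_I_nat_mul_le_one (m : ℕ) (τ : ℍ) :
    ‖cexp (2 * π * I * m * τ)‖ ≤ 1 := by
  rw [show 2 * π * I * m * τ = m * (2 * π * I * τ) by ring, exp_nat_mul, norm_pow]
  exact pow_le_one₀ (norm_nonneg _) (norm_exp_two_pi_I_lt_one τ).le

lemma term_eq_eisSummand_mul (m k : ℕ) (M : SL2Z) (τ : ℍ) :
    term m k M τ = eisSummand k (M 1) τ * cexp (2 * π * I * m * (M • τ : ℍ)) := by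
  rw [term, eisSummand, coe_specialLinearGroup_apply]
  simp

lemma norm_term_le (m k : ℕ) (M : SL2Z) (τ : ℍ) :
    ‖term m k M τ‖ ≤ ‖eisSummand k (M 1) τ‖ := by
  rw [term_eq_eisSummand_mul, norm_mul]
  exact mul_le_of_le_one_right (norm_nonneg _) (norm_cexp_two_pi_I_nat_mul_le_one m _)

lemma term_of_lowerLeft_eq_zero (m : ℕ) {k : ℕ} (hk : Even k) {M : SL2Z} (hc : M 1 0 = 0)
    (τ : ℍ) : term m k M τ = cexp (2 * π * I * m * τ) := by
  obtain ⟨n, hn⟩ := exists_eq_T_zpow_of_c_eq_zero hc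
  have hperiod : cexp (2 * π * I * m * (τ + n)) = cexp (2 * π * I * m * τ) := by
    rw [mul_add, exp_add, show 2 * π * I * m * n = (m * n : ℤ) * (2 * π * I) by push_cast; ring,
      exp_int_mul_two_pi_mul_I, mul_one]
  rw [term_eq_eisSummand_mul, hn, coe_T_zpow_smul_eq, hperiod, eisSummand]
  rcases SL2Z.lowerRight_eq_one_or_neg_one hc with hd | hd <;> simp [hc, hd, hk.neg_pow]

lemma norm_eisSummand_natCast (k : ℕ) (v : Fin 2 → ℤ) (τ : ℍ) :
    ‖eisSummand k v τ‖ = ‖(v 0 : ℂ) * τ + v 1‖⁻¹ ^ k := by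
  rw [eisSummand, norm_zpow, zpow_neg, zpow_natCast, inv_pow]

lemma norm_term_le_of_three_le (m : ℕ) {k : ℕ} (hk : 3 ≤ k) (M : SL2Z) {τ : ℍ}
    (hτ : 1 ≤ τ.im) : ‖term m k M τ‖ ≤ ‖eisSummand 3 (M 1) τ‖ := by
  refine (norm_term_le m k M τ).trans ?_
  rw [norm_eisSummand_natCast, show (3 : ℤ) = (3 : ℕ) from rfl, norm_eisSummand_natCast]
  exact pow_le_pow_of_le_one (by positivity)
    (inv_le_one_of_one_le₀ (SL2Z.one_le_norm_denom M hτ)) hk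

lemma tendsto_term_atTop_zero (m : ℕ) {M : SL2Z} (hc : M 1 0 ≠ 0) {τ : ℍ} (hτ : 1 < τ.im) :
    Tendsto (fun k => term m k M τ) atTop (𝓝 0) := by
  have hw : 1 < ‖(M 1 0 : ℂ) * τ + M 1 1‖ := hτ.trans_le (im_le_norm_mul_add hc _ τ.im_pos.le)
  refine squeeze_zero_norm (fun k => (norm_term_le m k M τ).trans_eq
    (norm_eisSummand_natCast k _ τ)) ?_
  exact tendsto_pow_atTop_nhds_zero_of_lt_one (by positivity) (inv_lt_one_of_one_lt₀ hw)

lemma tendsto_term_two_mul (m : ℕ) (M : SL2Z) {τ : ℍ} (hτ : 1 < τ.im) :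
    Tendsto (fun n : ℕ => term m (2 * n) M τ) atTop
      (𝓝 (if M 1 0 = 0 then cexp (2 * π * I * m * τ) else 0)) := by
  split_ifs with hc
  · simp_rw [term_of_lowerLeft_eq_zero m (even_two_mul _) hc]
    exact tendsto_const_nhds
  · exact (tendsto_term_atTop_zero m hc hτ).comp
      (tendsto_atTop_mono (fun n => Nat.le_mul_of_pos_left n two_pos) tendsto_id)

lemma T_mul_row_one (u : ℤ) (A : Matrix (Fin 2) (Fin 2) ℤ) : (!![1, u; 0, 1] * A) 1 = A 1 := by
  ext j
  simp [Matrix.mul_apply, Fin.sum_univ_two]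

def bottomRow (q : ℕ) : Quot (rel q) → Fin 2 → ℤ :=
  Quot.lift (fun M => M.1 1) fun M N ⟨u, hu⟩ => by
    show M.1.1 1 = N.1.1 1
    rw [hu, T_mul_row_one]

lemma bottomRow_mk {q : ℕ} (M : Level q) : bottomRow q (Quot.mk _ M) = M.1 1 := rfl

lemma bottomRow_out {q : ℕ} (c : Quot (rel q)) : (Quot.out c).1 1 = bottomRow q c := by
  rw [← bottomRow_mk, Quot.out_eq]

lemma rel_of_bottomRow_eq {q : ℕ} {M N : Level q} (h : M.1 1 = N.1 1) : rel q M N := by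
  have h0 : M.1 1 0 = N.1 1 0 := congrFun h 0
  have h1 : M.1 1 1 = N.1 1 1 := congrFun h 1
  have hM := M.1.det_coe
  have hN := N.1.det_coe
  rw [Matrix.det_fin_two, ← h0, ← h1] at hN
  rw [Matrix.det_fin_two] at hM
  -- comparing top rows of `N = T^u M` forces `u = a b' - a' b`
  refine ⟨M.1 0 0 * N.1 0 1 - N.1 0 0 * M.1 0 1, ?_⟩
  ext i j
  fin_cases i <;> fin_cases j <;> simp [Matrix.mul_apply, Fin.sum_univ_two]
  · linear_combination (M.1 0 0) * hN - (N.1 0 0) * hM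
  · linear_combination (M.1 0 1) * hN - (N.1 0 1) * hM
  · exact h0.symm
  · exact h1.symm

lemma bottomRow_injective (q : ℕ) : Function.Injective (bottomRow q) := by
  rintro ⟨M⟩ ⟨N⟩ h
  exact Quot.sound (rel_of_bottomRow_eq h)

def cosetOne (q : ℕ) : Quot (rel q) := Quot.mk _ ⟨1, by simp⟩

def cosetNegOne (q : ℕ) : Quot (rel q) := Quot.mk _ ⟨-1, by simp⟩

lemma bottomRow_cosetOne (q : ℕ) : bottomRow q (cosetOne q) = ![0, 1] := by
  show ((1 : SL2Z) : Matrix (Fin 2) (Fin 2) ℤ) 1 = _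
  ext j
  fin_cases j <;> simp

lemma bottomRow_cosetNegOne (q : ℕ) : bottomRow q (cosetNegOne q) = ![0, -1] := by
  show ((-1 : SL2Z) : Matrix (Fin 2) (Fin 2) ℤ) 1 = _
  ext j
  fin_cases j <;> simp

lemma eq_cosetOne_or_eq_cosetNegOne {q : ℕ} {c : Quot (rel q)} (hc : bottomRow q c 0 = 0) :
    c = cosetOne q ∨ c = cosetNegOne q := by
  induction c using Quot.ind with | mk M => ?_
  rw [bottomRow_mk] at hc
  rcases SL2Z.lowerRight_eq_one_or_neg_one hc with hd | hd
  · refine .inl (bottomRow_injective q ?_)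
    rw [bottomRow_cosetOne, bottomRow_mk]
    ext j
    fin_cases j <;> simp [hc, hd]
  · refine .inr (bottomRow_injective q ?_)
    rw [bottomRow_cosetNegOne, bottomRow_mk]
    ext j
    fin_cases j <;> simp [hc, hd]

lemma tsum_ite_bottomRow_eq_zero (q : ℕ) (a : ℂ) :
    ∑' c : Quot (rel q), (if bottomRow q c 0 = 0 then a else 0) = 2 * a := by
  classical
  have hne : cosetOne q ≠ cosetNegOne q := fun h => by
    simpa [bottomRow_cosetOne, bottomRow_cosetNegOne] using congrArg (bottomRow q · 1) h
  rw [tsum_eq_sum (s := {cosetOne q, cosetNegOne q}), Finset.sum_pair hne]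
  · simp [bottomRow_cosetOne, bottomRow_cosetNegOne, two_mul]
  · intro c hc
    rw [if_neg]
    contrapose! hc
    simpa using eq_cosetOne_or_eq_cosetNegOne hc

theorem tendsto_poincare_two_mul (m q : ℕ) {τ : ℍ} (hτ : 1 < τ.im) :
    Tendsto (fun n : ℕ => Poincare m (2 * n) q τ) atTop (𝓝 (2 * cexp (2 * π * I * m * τ))) := by
  rw [← tsum_ite_bottomRow_eq_zero q]
  refine tendsto_tsum_of_dominated_convergence (bound := fun c => ‖eisSummand 3 (bottomRow q c) τ‖)
    ((summable_norm_eisSummand le_rfl τ).comp_injective (bottomRow_injective q)) (fun c => ?_) ?_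
  · rw [← bottomRow_out]
    exact tendsto_term_two_mul m _ hτ
  · filter_upwards [eventually_ge_atTop 2] with n hn c
    rw [← bottomRow_out]
    exact norm_term_le_of_three_le m (by omega) _ hτ.le

end EP

theorem statement18_general (m q : ℕ) :
    {k : ℕ | Even k ∧ ∃ z : ℂ, 0 < z.im ∧ EP.Poincare m k q z ≠ 0}.Infinite := by
  let τ : ℍ := ⟨2 * I, by simp⟩
  have hlim := EP.tendsto_poincare_two_mul m q (τ := τ) (by simp [τ])
  have hne : ∀ᶠ n in atTop, EP.Poincare m (2 * n) q τ ≠ 0 :=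
    hlim.eventually_ne (mul_ne_zero two_ne_zero (exp_ne_zero _))
  have hinf : {n | EP.Poincare m (2 * n) q τ ≠ 0}.Infinite :=
    Nat.frequently_atTop_iff_infinite.1 hne.frequently
  refine (hinf.image (mul_right_injective₀ two_ne_zero).injOn).mono ?_
  rintro _ ⟨n, hn, rfl⟩
  exact ⟨even_two_mul n, τ, τ.im_pos, hn⟩

/-- Gaigalas-type result: for any positive integers `m` and `q` there
are infinitely many even integers `k` for which the Poincaré series `P_{m,k,q}` is not
identically zero on `ℍ`. -/
theorem statement18 (m q : ℕ) (hm : 0 < m) (hq : 0 < q) :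
    {k : ℕ | Even k ∧ ∃ z : ℂ, 0 < z.im ∧ EP.Poincare m k q z ≠ 0}.Infinite :=
  statement18_general m q
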